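/- arXiv:2408.03447 — 6 statements merged into one kernel-verified Lean document; each statement's English description precedes it below -/
import Mathlib

section
/- Fix S_a > 0 and I_a ∈ ℝ, and define the peak infection value P(β, γ, u) = ρ (log ρ − 1 − log S_a) + S_a + I_a where ρ = (γ + u)/β, for β > 0, γ > 0, u ≥ 0. (i) If u₁ < u₂ and 0 < (γ + u₂)/β ≤ S_a, then P(β, γ, u₂) < P(β, γ, u₁). (ii) If γ₁ < γ₂ and 0 < (γ₂ + u)/β ≤ S_a, then P(β, γ₂, u) < P(β, γ₁, u). (iii) If 0 < β₁ < β₂ and 0 < (γ + u)/β₁ ≤ S_a, then P(β₂, γ, u) > P(β₁, γ, u). That is, the peak infection value strictly decreases as u or γ increases and strictly increases as β increases. -/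
/-- The peak infection value `P(β, γ, u) = ρ (log ρ − 1 − log S_a) + S_a + I_a`
with `ρ = (γ + u)/β`. -/
noncomputable def peakValue (S_a I_a β γ u : ℝ) : ℝ :=
  ((γ + u) / β) * (Real.log ((γ + u) / β) - 1 - Real.log S_a) + S_a + I_a

lemma key_anti (S_a : ℝ) (hSa : 0 < S_a) :
    StrictAntiOn (fun x : ℝ => x * (Real.log x - 1 - Real.log S_a)) (Set.Ioc 0 S_a) := by
  apply strictAntiOn_of_deriv_neg (convex_Ioc 0 S_a)
  · exact continuousOn_id.mul
      (((Real.continuousOn_log.mono fun x hx => ne_of_gt hx.1).sub continuousOn_const).sub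
        continuousOn_const)
  · intro x hx
    rw [interior_Ioc] at hx
    have hx0 : x ≠ 0 := ne_of_gt hx.1
    have hd : HasDerivAt (fun x : ℝ => x * (Real.log x - 1 - Real.log S_a))
        (1 * (Real.log x - 1 - Real.log S_a) + x * x⁻¹) x :=
      (hasDerivAt_id x).mul (((Real.hasDerivAt_log hx0).sub_const 1).sub_const _)
    rw [hd.deriv]
    have hxinv : x * x⁻¹ = 1 := by field_simp
    rw [hxinv]
    have hlog : Real.log x < Real.log S_a := Real.log_lt_log hx.1 hx.2
    linarith

lemma key (S_a I_a : ℝ) (hSa : 0 < S_a) {r₁ r₂ : ℝ} (h1 : 0 < r₁) (h12 : r₁ < r₂)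
    (h2 : r₂ ≤ S_a) :
    r₂ * (Real.log r₂ - 1 - Real.log S_a) + S_a + I_a <
    r₁ * (Real.log r₁ - 1 - Real.log S_a) + S_a + I_a := by
  have := key_anti S_a hSa ⟨h1, le_of_lt (lt_of_lt_of_le h12 h2)⟩ ⟨h1.trans h12, h2⟩ h12
  simp only at this
  linarith

/-- The peak infection value strictly decreases as `u` or `γ`
increases, and strictly increases as `β` increases. -/
theorem peak_value_monotonicity (S_a I_a : ℝ) (hSa : 0 < S_a) :
    (∀ β γ u₁ u₂ : ℝ, 0 < β → 0 < γ → 0 ≤ u₁ → 0 ≤ u₂ → u₁ < u₂ →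
        0 < (γ + u₂) / β → (γ + u₂) / β ≤ S_a →
        peakValue S_a I_a β γ u₂ < peakValue S_a I_a β γ u₁) ∧
    (∀ β γ₁ γ₂ u : ℝ, 0 < β → 0 < γ₁ → 0 < γ₂ → 0 ≤ u → γ₁ < γ₂ →
        0 < (γ₂ + u) / β → (γ₂ + u) / β ≤ S_a →
        peakValue S_a I_a β γ₂ u < peakValue S_a I_a β γ₁ u) ∧
    (∀ β₁ β₂ γ u : ℝ, 0 < β₁ → β₁ < β₂ → 0 < γ → 0 ≤ u →
        0 < (γ + u) / β₁ → (γ + u) / β₁ ≤ S_a →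
        peakValue S_a I_a β₁ γ u < peakValue S_a I_a β₂ γ u) := by
  refine ⟨?_, ?_, ?_⟩
  · intro β γ u₁ u₂ hβ hγ hu₁ hu₂ h hpos hle
    exact key S_a I_a hSa (by positivity) (by apply div_lt_div_of_pos_right (by linarith) hβ) hle
  · intro β γ₁ γ₂ u hβ hγ₁ hγ₂ hu h hpos hle
    exact key S_a I_a hSa (by positivity) (by apply div_lt_div_of_pos_right (by linarith) hβ) hle
  · intro β₁ β₂ γ u hβ₁ h hγ hu hpos hle
    have hβ₂ : 0 < β₂ := by linarith
    exact key S_a I_a hSa (by positivity) (div_lt_div_of_pos_left (by linarith) hβ₁ h) hle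
end

section
/- Let β > 0 and let S, S*, I, I* : ℝ → ℝ with S and S* differentiable and strictly positive on [a, b], I and I* continuous on [a, b], S'(t) = −β S(t) I(t) and (S*)'(t) = −β S*(t) I*(t) on [a, b]. If I(t) ≤ I*(t) for all t ∈ [a, b] and S(a) ≥ S*(a), then S(t) ≥ S*(t) for all t ∈ [a, b]. -/
/-- Comparison of susceptible fractions: if `I ≤ I*` pointwise on
`[a, b]` and `S a ≥ S* a`, then `S ≥ S*` on `[a, b]`. -/
theorem susceptible_comparison
    (β a b : ℝ) (hβ : 0 < β)
    (S Sstar I Istar : ℝ → ℝ)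
    (hSpos : ∀ t ∈ Set.Icc a b, 0 < S t)
    (hSstarpos : ∀ t ∈ Set.Icc a b, 0 < Sstar t)
    (hIcont : ContinuousOn I (Set.Icc a b))
    (hIstarcont : ContinuousOn Istar (Set.Icc a b))
    (hS : ∀ t ∈ Set.Icc a b, HasDerivAt S (-β * S t * I t) t)
    (hSstar : ∀ t ∈ Set.Icc a b, HasDerivAt Sstar (-β * Sstar t * Istar t) t)
    (hIle : ∀ t ∈ Set.Icc a b, I t ≤ Istar t)
    (hinit : Sstar a ≤ S a) :
    ∀ t ∈ Set.Icc a b, Sstar t ≤ S t := by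
  intro t ht
  set g : ℝ → ℝ := fun t => Real.log (S t) - Real.log (Sstar t) with hg
  have hgderiv : ∀ x ∈ Set.Icc a b,
      HasDerivAt g (β * Istar x - β * I x) x := by
    intro x hx
    have h1 : HasDerivAt (fun t => Real.log (S t)) (-β * S x * I x / S x) x :=
      (hS x hx).log (hSpos x hx).ne'
    have h2 : HasDerivAt (fun t => Real.log (Sstar t))
        (-β * Sstar x * Istar x / Sstar x) x :=
      (hSstar x hx).log (hSstarpos x hx).ne'
    have := h1.sub h2
    convert this using 1
    · rfl
    · rfl
    · rfl
    have h3 := (hSpos x hx).ne'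
    have h4 := (hSstarpos x hx).ne'
    field_simp
    ring
  have hcont : ContinuousOn g (Set.Icc a b) :=
    fun x hx => ((hgderiv x hx).continuousAt).continuousWithinAt
  have hmono : MonotoneOn g (Set.Icc a b) := by
    apply monotoneOn_of_deriv_nonneg (convex_Icc a b) hcont
    · intro x hx
      rw [interior_Icc] at hx
      exact ((hgderiv x (Set.mem_Icc_of_Ioo hx)).differentiableAt).differentiableWithinAt
    · intro x hx
      rw [interior_Icc] at hx
      have hx' := Set.mem_Icc_of_Ioo hx
      rw [(hgderiv x hx').deriv]
      have := hIle x hx'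
      nlinarith
  have hab : a ∈ Set.Icc a b := Set.left_mem_Icc.mpr (le_trans ht.1 ht.2)
  have hga : 0 ≤ g a := by
    simp only [hg, sub_nonneg]
    exact Real.log_le_log (hSstarpos a hab) hinit
  have hgt : 0 ≤ g t := le_trans hga (hmono hab ht ht.1)
  have : Real.log (Sstar t) ≤ Real.log (S t) := by
    have := hgt; simp only [hg, sub_nonneg] at this; exact this
  exact (Real.log_le_log_iff (hSstarpos t ht) (hSpos t ht)).mp this
end

section
/- Let β > 0 and let (S, I, R) and (S*, I*, R*) be triples of functions on [a, b] with S + I + R = 1 and S* + I* + R* = 1 identically, S and S* differentiable and strictly positive on [a, b], I and I* continuous, S' = −β S I and (S*)' = −β S* I* on [a, b]. If I(t) ≤ I*(t) for all t ∈ [a, b] and S(a) ≥ S*(a), then the cumulative infected fractions satisfy I(t) + R(t) ≤ I*(t) + R*(t) for all t ∈ [a, b]. -/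
/-- If the robust trajectory keeps the infected fraction pointwise
below the optimal one and starts with at least as many susceptibles, then its
cumulative infected fraction `I + R` stays below `I* + R*` on `[a, b]`. -/
theorem cumulative_infection_comparison
    (β a b : ℝ) (hβ : 0 < β)
    (S I R Sstar Istar Rstar : ℝ → ℝ)
    (hsum : ∀ t, S t + I t + R t = 1)
    (hsumstar : ∀ t, Sstar t + Istar t + Rstar t = 1)
    (hSpos : ∀ t ∈ Set.Icc a b, 0 < S t)
    (hSstarpos : ∀ t ∈ Set.Icc a b, 0 < Sstar t)
    (hIcont : ContinuousOn I (Set.Icc a b))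
    (hIstarcont : ContinuousOn Istar (Set.Icc a b))
    (hS : ∀ t ∈ Set.Icc a b, HasDerivAt S (-β * S t * I t) t)
    (hSstar : ∀ t ∈ Set.Icc a b, HasDerivAt Sstar (-β * Sstar t * Istar t) t)
    (hIle : ∀ t ∈ Set.Icc a b, I t ≤ Istar t)
    (hinit : Sstar a ≤ S a) :
    ∀ t ∈ Set.Icc a b, I t + R t ≤ Istar t + Rstar t := by
  intro t ht
  -- f = log S - log Sstar has derivative β (Istar - I) ≥ 0 on [a,b]
  set f : ℝ → ℝ := fun u => Real.log (S u) - Real.log (Sstar u) with hf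
  have hderiv : ∀ u ∈ Set.Icc a b, HasDerivAt f (β * (Istar u - I u)) u := by
    intro u hu
    have h1 : HasDerivAt (fun x => Real.log (S x)) ((-β * S u * I u) / S u) u :=
      (hS u hu).log (hSpos u hu).ne'
    have h2 : HasDerivAt (fun x => Real.log (Sstar x)) ((-β * Sstar u * Istar u) / Sstar u) u :=
      (hSstar u hu).log (hSstarpos u hu).ne'
    have : HasDerivAt (fun x => Real.log (S x) - Real.log (Sstar x)) _ u := h1.sub h2
    have e1 : (-β * S u * I u) / S u = -β * I u := by
      field_simp [(hSpos u hu).ne']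
    have e2 : (-β * Sstar u * Istar u) / Sstar u = -β * Istar u := by
      field_simp [(hSstarpos u hu).ne']
    rw [e1, e2] at this
    convert this using 1
    ring
  have hmono : MonotoneOn f (Set.Icc a b) := by
    apply monotoneOn_of_deriv_nonneg (convex_Icc a b)
    · exact fun u hu => ((hderiv u hu).continuousAt).continuousWithinAt
    · intro u hu
      rw [interior_Icc] at hu
      exact (hderiv u (Set.mem_Icc_of_Ioo hu)).differentiableAt.differentiableWithinAt
    · intro u hu
      rw [interior_Icc] at hu
      have hu' := Set.mem_Icc_of_Ioo hu
      rw [(hderiv u hu').deriv]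
      have := hIle u hu'
      nlinarith
  have ha : a ∈ Set.Icc a b := ⟨le_refl a, ht.1.trans ht.2⟩
  have hfa : 0 ≤ f a := by
    simp only [hf, sub_nonneg]
    exact Real.log_le_log (hSstarpos a ha) hinit
  have hft : 0 ≤ f t := hfa.trans (hmono ha ht ht.1)
  have hSle : Sstar t ≤ S t := by
    have : Real.log (Sstar t) ≤ Real.log (S t) := by
      have := hft; simp only [hf, sub_nonneg] at this; exact this
    exact (Real.log_le_log_iff (hSstarpos t ht) (hSpos t ht)).mp this
  have h1 := hsum t
  have h2 := hsumstar t
  linarith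
end

section
/- Under the hypotheses of the additional-cost formula — t̂_b ≤ t_b* ≤ t_h* ≤ t̂_h, û(t) = β̂_max Ŝ_max(t) − γ̂_min on [t̂_b, t̂_h], u*(t) = β S*(t) − γ on [t_b*, t_h*] and u* = 0 elsewhere, Ŝ_max and S* integrable — assume additionally β̂_max ≥ 0, β ≥ 0, Ŝ_max(t) ≤ Ŝ_max(t̂_b) for all t ∈ [t̂_b, t̂_h], and S*(t) ≥ S*(t_h*) for all t ∈ [t_b*, t_h*]. Then the additional cost C = ∫_{t̂_b}^{t̂_h} (û − u*) dt satisfies C ≤ C̄, where C̄ = (Ŝ_max(t̂_b) β̂_max − γ̂_min)(t_b* − t̂_b + t̂_h − t_h*) + (Ŝ_max(t̂_b) β̂_max − γ̂_min − S*(t_h*) β + γ)(t_h* − t_b*). -/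
open MeasureTheory

/-- Upper bound `C̄` on the additional cost
`C = ∫_{t̂_b}^{t̂_h} (û − u*)`, obtained by bounding `Ŝ_max` above by its initial
value and `S*` below by its final value. -/
theorem additional_cost_upper_bound
    (βmax γmin β γ tbh tbs ths thh : ℝ)
    (h₁ : tbh ≤ tbs) (h₂ : tbs ≤ ths) (h₃ : ths ≤ thh)
    (hβmax : 0 ≤ βmax) (hβ : 0 ≤ β)
    (Smax Sstar : ℝ → ℝ)
    (hSmax : IntervalIntegrable Smax volume tbh thh)
    (hSstar : IntervalIntegrable Sstar volume tbh thh)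
    (hSmax_le : ∀ t ∈ Set.Icc tbh thh, Smax t ≤ Smax tbh)
    (hSstar_ge : ∀ t ∈ Set.Icc tbs ths, Sstar ths ≤ Sstar t)
    (uhat ustar : ℝ → ℝ)
    (huhat : ∀ t ∈ Set.Icc tbh thh, uhat t = βmax * Smax t - γmin)
    (hustar_on : ∀ t ∈ Set.Icc tbs ths, ustar t = β * Sstar t - γ)
    (hustar_off : ∀ t ∈ Set.Icc tbh thh, t ∉ Set.Icc tbs ths → ustar t = 0) :
    ∫ t in tbh..thh, (uhat t - ustar t) ≤
      (Smax tbh * βmax - γmin) * (tbs - tbh + thh - ths)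
        + (Smax tbh * βmax - γmin - Sstar ths * β + γ) * (ths - tbs) := by
  have hbh : tbh ≤ thh := h₁.trans (h₂.trans h₃)
  set G : ℝ → ℝ := fun t =>
    βmax * Smax t - γmin - Set.indicator (Set.Icc tbs ths) (fun t => β * Sstar t - γ) t with hG
  -- the integrand agrees with G on [tbh, thh]
  have hfg : Set.EqOn (fun t => uhat t - ustar t) G (Set.uIcc tbh thh) := by
    intro t ht
    rw [Set.uIcc_of_le hbh] at ht
    simp only [hG, Set.indicator]
    by_cases h : t ∈ Set.Icc tbs ths
    · rw [huhat t ht, hustar_on t h, if_pos h]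
    · rw [huhat t ht, hustar_off t ht h, if_neg h]
  -- integrability of G
  have hIndInt : IntervalIntegrable
      (Set.indicator (Set.Icc tbs ths) (fun t => β * Sstar t - γ)) volume tbh thh := by
    rw [intervalIntegrable_iff]
    exact (((hSstar.const_mul β).sub (intervalIntegrable_const)).def').indicator
      measurableSet_Icc
  have hGint : IntervalIntegrable G volume tbh thh :=
    ((hSmax.const_mul βmax).sub intervalIntegrable_const).sub hIndInt
  have hG1 : IntervalIntegrable G volume tbh tbs :=
    hGint.mono_set (Set.uIcc_subset_uIcc (by simp [Set.mem_uIcc, le_refl, hbh])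
      (by simp [Set.mem_uIcc, h₁, h₂.trans h₃]))
  have hG2 : IntervalIntegrable G volume tbs ths :=
    hGint.mono_set (Set.uIcc_subset_uIcc (by simp [Set.mem_uIcc, h₁, h₂.trans h₃])
      (by simp [Set.mem_uIcc, h₁.trans h₂, h₃]))
  have hG3 : IntervalIntegrable G volume ths thh :=
    hGint.mono_set (Set.uIcc_subset_uIcc (by simp [Set.mem_uIcc, h₁.trans h₂, h₃])
      (by simp [Set.mem_uIcc, hbh, le_refl]))
  have hsplit : ∫ t in tbh..thh, G t =
      (∫ t in tbh..tbs, G t) + (∫ t in tbs..ths, G t) + (∫ t in ths..thh, G t) := by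
    rw [intervalIntegral.integral_add_adjacent_intervals hG1 hG2,
      intervalIntegral.integral_add_adjacent_intervals (hG1.trans hG2) hG3]
  set A : ℝ := Smax tbh * βmax - γmin with hA
  set B : ℝ := Smax tbh * βmax - γmin - Sstar ths * β + γ with hB
  -- bounds on each subinterval
  have hbound1 : ∫ t in tbh..tbs, G t ≤ (tbs - tbh) * A := by
    have : ∫ t in tbh..tbs, G t ≤ ∫ _t in tbh..tbs, A := by
      refine intervalIntegral.integral_mono_ae_restrict h₁ hG1 intervalIntegrable_const ?_
      have hne : ∀ᵐ t ∂(volume.restrict (Set.Icc tbh tbs)), t ≠ tbs :=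
        ae_restrict_of_ae (by
          refine ae_iff.mpr ?_
          simp [Set.setOf_eq_eq_singleton'] )
      filter_upwards [hne, ae_restrict_mem measurableSet_Icc] with t ht hmem
      have htb : t ∉ Set.Icc tbs ths := fun h => ht (le_antisymm (hmem.2) h.1)
      simp only [hG, Set.indicator_of_notMem htb, sub_zero, hA]
      have := hSmax_le t ⟨hmem.1, hmem.2.trans (h₂.trans h₃)⟩
      nlinarith
    rwa [intervalIntegral.integral_const, smul_eq_mul] at this
  have hbound2 : ∫ t in tbs..ths, G t ≤ (ths - tbs) * B := by
    have : ∫ t in tbs..ths, G t ≤ ∫ _t in tbs..ths, B := by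
      refine intervalIntegral.integral_mono_on h₂ hG2 intervalIntegrable_const ?_
      intro t ht
      simp only [hG, Set.indicator_of_mem ht, hB]
      have h1 := hSmax_le t ⟨h₁.trans ht.1, ht.2.trans h₃⟩
      have h2 := hSstar_ge t ht
      nlinarith
    rwa [intervalIntegral.integral_const, smul_eq_mul] at this
  have hbound3 : ∫ t in ths..thh, G t ≤ (thh - ths) * A := by
    have : ∫ t in ths..thh, G t ≤ ∫ _t in ths..thh, A := by
      refine intervalIntegral.integral_mono_ae_restrict h₃ hG3 intervalIntegrable_const ?_
      have hne : ∀ᵐ t ∂(volume.restrict (Set.Icc ths thh)), t ≠ ths :=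
        ae_restrict_of_ae (by
          refine ae_iff.mpr ?_
          simp [Set.setOf_eq_eq_singleton'] )
      filter_upwards [hne, ae_restrict_mem measurableSet_Icc] with t ht hmem
      have htb : t ∉ Set.Icc tbs ths := fun h => ht (le_antisymm h.2 hmem.1)
      simp only [hG, Set.indicator_of_notMem htb, sub_zero, hA]
      have := hSmax_le t ⟨(h₁.trans h₂).trans hmem.1, hmem.2⟩
      nlinarith
    rwa [intervalIntegral.integral_const, smul_eq_mul] at this
  calc ∫ t in tbh..thh, (uhat t - ustar t) = ∫ t in tbh..thh, G t :=
        intervalIntegral.integral_congr hfg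
    _ ≤ (tbs - tbh) * A + (ths - tbs) * B + (thh - ths) * A := by
        rw [hsplit]; gcongr
    _ = A * (tbs - tbh + thh - ths) + B * (ths - tbs) := by ring
end

section
/- Let β > 0, γ > 0, Ī > 0 and β̂_max ≥ β, γ̂_min ≤ γ. Let S, I : ℝ → ℝ be a controlled SIR trajectory on [t̂_b, ∞) with S(t) ≥ 0 and I(t) ≥ 0 for all t ≥ t̂_b, and let Ŝ : ℝ → ℝ satisfy Ŝ(t) ≥ S(t) for all t ≥ t̂_b. Suppose the robust control is û(t) = β̂_max Ŝ(t) − γ̂_min for t ∈ [t̂_b, t̂_h) and û(t) = 0 for t ≥ t̂_h, where β̂_max Ŝ(t) − γ̂_min ≤ 0 for all t ≥ t̂_h, and suppose I(t̂_b) ≤ Ī. Then I is nonincreasing on [t̂_b, ∞) and I(t) ≤ Ī for all t ≥ t̂_b; i.e., the robust control strategy is feasible. -/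
/-- Feasibility of the robust control strategy: overestimating
the epidemic (`β̂_max ≥ β`, `γ̂_min ≤ γ`, `Ŝ ≥ S`) with the control
`û = β̂_max Ŝ − γ̂_min` on `[t̂_b, t̂_h)` and `û = 0` afterwards keeps the infected
fraction nonincreasing, hence below the threshold `Ī`. -/
theorem robust_control_feasible
    (β γ Ibar βmax γmin tb th : ℝ)
    (hβ : 0 < β) (hγ : 0 < γ) (hIbar : 0 < Ibar)
    (hβmax : β ≤ βmax) (hγmin : γmin ≤ γ) (htbth : tb ≤ th)
    (S I Shat uhat : ℝ → ℝ)
    (hS : ∀ t, tb ≤ t → HasDerivAt S (-β * S t * I t) t)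
    (hI : ∀ t, tb ≤ t → HasDerivAt I (β * S t * I t - (γ + uhat t) * I t) t)
    (hSnn : ∀ t, tb ≤ t → 0 ≤ S t)
    (hInn : ∀ t, tb ≤ t → 0 ≤ I t)
    (hShat : ∀ t, tb ≤ t → S t ≤ Shat t)
    (huhat_on : ∀ t, tb ≤ t → t < th → uhat t = βmax * Shat t - γmin)
    (huhat_off : ∀ t, th ≤ t → uhat t = 0)
    (hherd : ∀ t, th ≤ t → βmax * Shat t - γmin ≤ 0)
    (hIb : I tb ≤ Ibar) :
    AntitoneOn I (Set.Ici tb) ∧ ∀ t, tb ≤ t → I t ≤ Ibar := by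
  have hderiv_nonpos : ∀ t, tb ≤ t → β * S t * I t - (γ + uhat t) * I t ≤ 0 := by
    intro t ht
    have hSt := hSnn t ht
    have hIt := hInn t ht
    have hSh := hShat t ht
    have hcoef : β * S t - (γ + uhat t) ≤ 0 := by
      have hkey : β * S t ≤ βmax * Shat t := by nlinarith
      rcases lt_or_ge t th with hlt | hge
      · rw [huhat_on t ht hlt]; linarith
      · rw [huhat_off t hge]
        have := hherd t hge
        linarith
    nlinarith
  have hanti : AntitoneOn I (Set.Ici tb) := by
    apply antitoneOn_of_deriv_nonpos (convex_Ici tb)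
    · intro t ht
      exact (hI t ht).continuousAt.continuousWithinAt
    · intro t ht
      rw [interior_Ici] at ht
      exact (hI t (le_of_lt ht)).differentiableAt.differentiableWithinAt
    · intro t ht
      rw [interior_Ici] at ht
      rw [(hI t (le_of_lt ht)).deriv]
      exact hderiv_nonpos t (le_of_lt ht)
  refine ⟨hanti, fun t ht => ?_⟩
  exact le_trans (hanti (Set.self_mem_Ici) ht ht) hIb
end

section
/- Let h > 0, let Θ, E, W be 1×2 real matrices and Z a 2×2 real matrix with Z Zᵀ positive definite. Suppose L = Θ Z h + E + W and define Θ̂ = L Zᵀ (Z Zᵀ)⁻¹ / h. Then the estimation error satisfies ‖Θ̂ − Θ‖ ≤ (‖E‖ + ‖W‖)/(h √(λ_min(Z Zᵀ))), where ‖·‖ is the spectral norm and λ_min(Z Zᵀ) the smallest eigenvalue of Z Zᵀ. -/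
open Matrix

/-- The spectral (ℓ2 operator) norm of a real matrix, viewed as a linear map
between Euclidean spaces. -/
noncomputable def specNorm {m n : ℕ} (M : Matrix (Fin m) (Fin n) ℝ) : ℝ :=
  ‖LinearMap.toContinuousLinearMap (Matrix.toEuclideanLin M)‖

namespace SpecAux

lemma clm_apply {m n : ℕ} (M : Matrix (Fin m) (Fin n) ℝ) (x : EuclideanSpace ℝ (Fin n)) :
    LinearMap.toContinuousLinearMap (Matrix.toEuclideanLin M) x = Matrix.toEuclideanLin M x := rfl

lemma le_specNorm {m n : ℕ} (M : Matrix (Fin m) (Fin n) ℝ) (x : EuclideanSpace ℝ (Fin n)) :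
    ‖Matrix.toEuclideanLin M x‖ ≤ specNorm M * ‖x‖ := by
  rw [← clm_apply]
  exact (LinearMap.toContinuousLinearMap (Matrix.toEuclideanLin M)).le_opNorm x

lemma specNorm_nonneg {m n : ℕ} (M : Matrix (Fin m) (Fin n) ℝ) : 0 ≤ specNorm M :=
  norm_nonneg _

lemma specNorm_le_bound {m n : ℕ} (M : Matrix (Fin m) (Fin n) ℝ) {c : ℝ} (hc : 0 ≤ c)
    (hb : ∀ x : EuclideanSpace ℝ (Fin n), ‖Matrix.toEuclideanLin M x‖ ≤ c * ‖x‖) :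
    specNorm M ≤ c :=
  ContinuousLinearMap.opNorm_le_bound _ hc hb

lemma specNorm_mul_le {m n k : ℕ} (A : Matrix (Fin m) (Fin n) ℝ) (B : Matrix (Fin n) (Fin k) ℝ) :
    specNorm (A * B) ≤ specNorm A * specNorm B := by
  apply specNorm_le_bound _ (mul_nonneg (specNorm_nonneg A) (specNorm_nonneg B))
  intro x
  have hAB : Matrix.toEuclideanLin (A * B) x
      = Matrix.toEuclideanLin A (Matrix.toEuclideanLin B x) := by
    simp [Matrix.toEuclideanLin_apply, Matrix.mulVec_mulVec]
  rw [hAB]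
  calc ‖Matrix.toEuclideanLin A (Matrix.toEuclideanLin B x)‖
      ≤ specNorm A * ‖Matrix.toEuclideanLin B x‖ := le_specNorm _ _
    _ ≤ specNorm A * (specNorm B * ‖x‖) := by
        exact mul_le_mul_of_nonneg_left (le_specNorm _ _) (specNorm_nonneg A)
    _ = specNorm A * specNorm B * ‖x‖ := by ring

lemma specNorm_add_le {m n : ℕ} (A B : Matrix (Fin m) (Fin n) ℝ) :
    specNorm (A + B) ≤ specNorm A + specNorm B := by
  apply specNorm_le_bound _ (add_nonneg (specNorm_nonneg A) (specNorm_nonneg B))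
  intro x
  have : Matrix.toEuclideanLin (A + B) x
      = Matrix.toEuclideanLin A x + Matrix.toEuclideanLin B x := by
    simp [map_add]
  rw [this]
  calc ‖Matrix.toEuclideanLin A x + Matrix.toEuclideanLin B x‖
      ≤ ‖Matrix.toEuclideanLin A x‖ + ‖Matrix.toEuclideanLin B x‖ := norm_add_le _ _
    _ ≤ specNorm A * ‖x‖ + specNorm B * ‖x‖ := add_le_add (le_specNorm _ _) (le_specNorm _ _)
    _ = (specNorm A + specNorm B) * ‖x‖ := by ring

lemma specNorm_smul {m n : ℕ} (c : ℝ) (A : Matrix (Fin m) (Fin n) ℝ) :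
    specNorm (c • A) = |c| * specNorm A := by
  have : LinearMap.toContinuousLinearMap (Matrix.toEuclideanLin (c • A))
      = c • LinearMap.toContinuousLinearMap (Matrix.toEuclideanLin A) := by
    ext x
    simp only [clm_apply, ContinuousLinearMap.coe_smul', Pi.smul_apply]
    exact _root_.map_smul (Matrix.toEuclideanLin) c A ▸ rfl
  unfold specNorm
  rw [this]
  exact (norm_smul c (LinearMap.toContinuousLinearMap (Matrix.toEuclideanLin A))).trans rfl

lemma dot_mulVec_self {n k : ℕ} (M : Matrix (Fin n) (Fin k) ℝ) (v w : Fin k → ℝ) :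
    dotProduct (M *ᵥ v) (M *ᵥ w) = dotProduct v ((Mᵀ * M) *ᵥ w) := by
  rw [← Matrix.mulVec_mulVec, dotProduct_mulVec v, Matrix.vecMul_transpose]

lemma inner_eq_dot {n : ℕ} (x y : EuclideanSpace ℝ (Fin n)) :
    (inner ℝ x y : ℝ) = dotProduct (WithLp.equiv 2 (Fin n → ℝ) x) (WithLp.equiv 2 (Fin n → ℝ) y) := by
  simp [PiLp.inner_apply, dotProduct, mul_comm]

/-- Lower eigenvalue bound: `A - μ•1` is PSD when `μ` is below all eigenvalues. -/
lemma sub_smul_one_posSemidef {n : ℕ} (A : Matrix (Fin n) (Fin n) ℝ) (hA : A.IsHermitian)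
    (μ : ℝ) (hμ : ∀ i, μ ≤ hA.eigenvalues i) : (A - μ • 1).PosSemidef := by
  have h1 : (μ • (1 : Matrix (Fin n) (Fin n) ℝ)) =
      (hA.eigenvectorUnitary : Matrix (Fin n) (Fin n) ℝ) * (μ • 1) *
        star (hA.eigenvectorUnitary : Matrix (Fin n) (Fin n) ℝ) := by
    rw [mul_smul_comm, mul_one, smul_mul_assoc,
      (Matrix.mem_unitaryGroup_iff).mp hA.eigenvectorUnitary.2]
  have h2 : A - μ • 1 =
      (hA.eigenvectorUnitary : Matrix (Fin n) (Fin n) ℝ) *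
        (diagonal (fun i => hA.eigenvalues i - μ)) *
        star (hA.eigenvectorUnitary : Matrix (Fin n) (Fin n) ℝ) := by
    conv_lhs => rw [hA.spectral_theorem, h1]
    rw [Unitary.conjStarAlgAut_apply, ← sub_mul, ← mul_sub, smul_one_eq_diagonal, diagonal_sub]
    simp [Function.comp, RCLike.ofReal_real_eq_id]
  rw [h2]
  exact (Matrix.PosSemidef.diagonal (fun i => sub_nonneg.2 (hμ i))).mul_mul_conjTranspose_same _

lemma inner_toEuclideanLin_ge {n : ℕ} (A : Matrix (Fin n) (Fin n) ℝ) (hA : A.IsHermitian)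
    (μ : ℝ) (hμ : ∀ i, μ ≤ hA.eigenvalues i) (x : EuclideanSpace ℝ (Fin n)) :
    μ * ‖x‖ ^ 2 ≤ inner ℝ x (Matrix.toEuclideanLin A x) := by
  have hps := sub_smul_one_posSemidef A hA μ hμ
  have h0 := hps.dotProduct_mulVec_nonneg (WithLp.equiv 2 (Fin n → ℝ) x)
  simp only [star_trivial] at h0
  have hexp : dotProduct (WithLp.equiv 2 (Fin n → ℝ) x) ((A - μ • 1) *ᵥ (WithLp.equiv 2 (Fin n → ℝ) x))
      = dotProduct (WithLp.equiv 2 (Fin n → ℝ) x) (A *ᵥ (WithLp.equiv 2 (Fin n → ℝ) x))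
        - μ * dotProduct (WithLp.equiv 2 (Fin n → ℝ) x) (WithLp.equiv 2 (Fin n → ℝ) x) := by
    rw [Matrix.sub_mulVec, dotProduct_sub, Matrix.smul_mulVec,
      Matrix.one_mulVec, dotProduct_smul]
    ring_nf
  rw [hexp] at h0
  have hxx : dotProduct (WithLp.equiv 2 (Fin n → ℝ) x) (WithLp.equiv 2 (Fin n → ℝ) x) = ‖x‖ ^ 2 := by
    rw [← inner_eq_dot]
    exact real_inner_self_eq_norm_sq x
  have hAx : (inner ℝ x (Matrix.toEuclideanLin A x) : ℝ)
      = dotProduct (WithLp.equiv 2 (Fin n → ℝ) x) (A *ᵥ (WithLp.equiv 2 (Fin n → ℝ) x)) := by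
    rw [inner_eq_dot, Matrix.toEuclideanLin_apply]
    simp
  rw [hxx] at h0
  rw [hAx]
  linarith

end SpecAux

open SpecAux in
/-- Error bound for the least squares estimator: if
`L = Θ Z h + E + W` and `Θ̂ = L Zᵀ (Z Zᵀ)⁻¹ / h` with `Z Zᵀ` positive definite,
then `‖Θ̂ − Θ‖ ≤ (‖E‖ + ‖W‖)/(h √(λ_min(Z Zᵀ)))`. -/
theorem estimation_error_bound
    (h : ℝ) (hh : 0 < h)
    (Θ E W L : Matrix (Fin 1) (Fin 2) ℝ) (Z : Matrix (Fin 2) (Fin 2) ℝ)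
    (hpd : (Z * Zᵀ).PosDef)
    (hL : L = h • (Θ * Z) + E + W)
    (Θhat : Matrix (Fin 1) (Fin 2) ℝ)
    (hΘhat : Θhat = h⁻¹ • (L * Zᵀ * (Z * Zᵀ)⁻¹)) :
    specNorm (Θhat - Θ) ≤
      (specNorm E + specNorm W) / (h * Real.sqrt (⨅ i, hpd.1.eigenvalues i)) := by
  set A := Z * Zᵀ with hA
  set B := A⁻¹ with hB
  set N := Zᵀ * B with hN
  set lam := (⨅ i, hpd.1.eigenvalues i) with hlam
  -- positivity of lam
  have hle : ∀ i, lam ≤ hpd.1.eigenvalues i := fun i =>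
    ciInf_le (Finite.bddBelow_range _) i
  have hlam_pos : 0 < lam := by
    obtain ⟨i, hi⟩ := Finite.exists_min hpd.1.eigenvalues
    exact lt_of_lt_of_le (hpd.eigenvalues_pos i) (le_ciInf hi)
  have hsqrt_pos : 0 < Real.sqrt lam := Real.sqrt_pos.2 hlam_pos
  -- invertibility
  have hAinv : A * B = 1 := Matrix.mul_nonsing_inv A hpd.det_pos.ne'.isUnit
  have hBA : B * A = 1 := Matrix.nonsing_inv_mul A hpd.det_pos.ne'.isUnit
  have hBsym : Bᵀ = B := by
    have := hpd.inv.isHermitian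
    simpa [Matrix.IsHermitian] using this
  -- error formula
  have herr : Θhat - Θ = h⁻¹ • ((E + W) * N) := by
    have expand : L * Zᵀ * B = h • (Θ) + (E + W) * N := by
      rw [hL]
      have : (Θ * Z) * Zᵀ * B = Θ := by
        rw [Matrix.mul_assoc, Matrix.mul_assoc, ← Matrix.mul_assoc Z, ← hA, hAinv,
          Matrix.mul_one]
      rw [hN, Matrix.add_mul, Matrix.add_mul, Matrix.add_mul, Matrix.add_mul,
        Matrix.smul_mul, Matrix.smul_mul, this, Matrix.add_mul,
        Matrix.mul_assoc E, Matrix.mul_assoc W]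
      abel
    rw [hΘhat, expand, smul_add, smul_smul, inv_mul_cancel₀ hh.ne', one_smul]
    abel
  -- bound on specNorm N
  have hNbound : specNorm N ≤ (Real.sqrt lam)⁻¹ := by
    apply specNorm_le_bound _ (by positivity)
    intro x
    set S := Matrix.toEuclideanLin B with hS
    set y : EuclideanSpace ℝ (Fin 2) := S x with hy
    -- ‖N x‖^2 = ⟪x, B x⟫
    have hNtN : Nᵀ * N = B := by
      rw [hN, Matrix.transpose_mul, hBsym, Matrix.transpose_transpose,
        Matrix.mul_assoc, ← Matrix.mul_assoc Z, ← hA, hAinv, Matrix.mul_one]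
    have hnorm_sq : ‖Matrix.toEuclideanLin N x‖ ^ 2 = inner ℝ x y := by
      rw [← real_inner_self_eq_norm_sq, inner_eq_dot, inner_eq_dot]
      rw [hy, hS, Matrix.toEuclideanLin_apply, Matrix.toEuclideanLin_apply]
      simp only [WithLp.equiv_apply, WithLp.ofLp_toLp]
      have h2 := dot_mulVec_self N (WithLp.equiv 2 (Fin 2 → ℝ) x) (WithLp.equiv 2 (Fin 2 → ℝ) x)
      rw [hNtN] at h2
      simpa using h2
    -- bound ‖y‖ ≤ ‖x‖ / lam
    have hAy : Matrix.toEuclideanLin A y = x := by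
      rw [hy, hS, Matrix.toEuclideanLin_apply, Matrix.toEuclideanLin_apply]
      simp only [WithLp.ofLp_toLp, Matrix.mulVec_mulVec, hAinv, Matrix.one_mulVec, WithLp.toLp_ofLp]
    have hlower : lam * ‖y‖ ^ 2 ≤ inner ℝ y x := by
      have := inner_toEuclideanLin_ge A hpd.1 lam hle y
      rwa [hAy] at this
    have hyx : (inner ℝ y x : ℝ) ≤ ‖y‖ * ‖x‖ := real_inner_le_norm y x
    have hy_le : ‖y‖ ≤ ‖x‖ / lam := by
      rcases eq_or_ne ‖y‖ 0 with h0 | h0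
      · rw [h0]; positivity
      · have hy_pos : 0 < ‖y‖ := lt_of_le_of_ne (norm_nonneg _) (Ne.symm h0)
        have : lam * ‖y‖ ^ 2 ≤ ‖y‖ * ‖x‖ := le_trans hlower hyx
        rw [le_div_iff₀ hlam_pos]
        nlinarith
    -- combine
    have hxy : (inner ℝ x y : ℝ) ≤ ‖x‖ * ‖y‖ := real_inner_le_norm x y
    have hsq : ‖Matrix.toEuclideanLin N x‖ ^ 2 ≤ ‖x‖ ^ 2 / lam := by
      rw [hnorm_sq]
      calc (inner ℝ x y : ℝ) ≤ ‖x‖ * ‖y‖ := hxy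
        _ ≤ ‖x‖ * (‖x‖ / lam) := mul_le_mul_of_nonneg_left hy_le (norm_nonneg _)
        _ = ‖x‖ ^ 2 / lam := by ring
    have h1 : ‖Matrix.toEuclideanLin N x‖ ≤ Real.sqrt (‖x‖ ^ 2 / lam) := by
      rw [← Real.sqrt_sq (norm_nonneg (Matrix.toEuclideanLin N x))]
      exact Real.sqrt_le_sqrt hsq
    calc ‖Matrix.toEuclideanLin N x‖ ≤ Real.sqrt (‖x‖ ^ 2 / lam) := h1
      _ = (Real.sqrt lam)⁻¹ * ‖x‖ := by
          rw [Real.sqrt_div (sq_nonneg _), Real.sqrt_sq (norm_nonneg _)]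
          ring
  -- final computation
  rw [herr, specNorm_smul, abs_of_pos (inv_pos.2 hh)]
  calc h⁻¹ * specNorm ((E + W) * N)
      ≤ h⁻¹ * (specNorm (E + W) * specNorm N) := by
        exact mul_le_mul_of_nonneg_left (specNorm_mul_le _ _) (by positivity)
    _ ≤ h⁻¹ * ((specNorm E + specNorm W) * (Real.sqrt lam)⁻¹) := by
        apply mul_le_mul_of_nonneg_left _ (by positivity)
        apply mul_le_mul (specNorm_add_le E W) hNbound (specNorm_nonneg N)
        exact add_nonneg (specNorm_nonneg E) (specNorm_nonneg W)
    _ = (specNorm E + specNorm W) / (h * Real.sqrt lam) := by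
        field_simp
end
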